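/- Let (X,d) be a complete metric space and let S = (X,(φ_j)_{j=1}^L,(p_j)_{j=1}^L) be an IFS with probabilities in which every φ_j is Lipschitz with constant at most α_S < 1, and let μ_S be its Hutchinson measure (the unique compactly supported Borel probability measure with Σ_j p_j φ_j♯μ_S = μ_S). Let ε > 0, let X̂ be a proper ε-net of X, let r : X → X̂ be a Borel measurable ε-projection, and define the discretized Markov operator M_Ŝ(ν) := Σ_{j=1}^L p_j · (r∘φ_j)♯ν. Then for every Borel probability measure ν with compact support contained in X̂ and every n ∈ ℕ, d_MK(M_Ŝⁿ(ν), μ_S) ≤ ε/(1−α_S) + α_Sⁿ · d_MK(ν, μ_S). In particular, for all sufficiently large n, d_MK(M_Ŝⁿ(ν), μ_S) ≤ 2ε/(1−α_S). -/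

import Mathlib

open MeasureTheory Filter

/-- The Monge–Kantorovich (Hutchinson) distance between two measures. -/
noncomputable def dMK {X : Type*} [MetricSpace X] [MeasurableSpace X]
    (μ ν : Measure X) : ℝ :=
  sSup {s : ℝ | ∃ f : X → ℝ, LipschitzWith 1 f ∧ s = |∫ x, f x ∂μ - ∫ x, f x ∂ν|}

/-- The topological support of a Borel measure. -/
def msupport {X : Type*} [TopologicalSpace X] [MeasurableSpace X]
    (μ : Measure X) : Set X :=
  {x | ∀ U : Set X, IsOpen U → x ∈ U → 0 < μ U}

/-! The discretized operator `M̂ ρ = ∑ pⱼ (r ∘ φⱼ)♯ρ` is within `ε` of the Markov operator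
`M ρ = ∑ pⱼ φⱼ♯ρ` in `d_MK`, because `r` moves points by at most `ε`, and `M` is an
`α_S`-contraction for `d_MK` fixing `μ_S`. Hence `d_MK(M̂ ρ, μ_S) ≤ ε + α_S d_MK(ρ, μ_S)`, and
iterating this affine recursion gives `ε / (1 - α_S) + α_Sⁿ d_MK(ν, μ_S)`.

Since `dMK` is a real `sSup` (junk `0` when unbounded), every estimate is made between
probability measures of compact support. The iterates stay compactly supported because `r` maps a
compact set into a bounded subset of the proper net, which is finite. -/

open Set NNReal

namespace MeasureTheory.Measure

section Topological

variable {X : Type*} [TopologicalSpace X] [MeasurableSpace X] {μ : Measure X}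

def IsCompactlySupported (μ : Measure X) : Prop :=
  ∃ K : Set X, IsCompact K ∧ μ Kᶜ = 0

theorem isCompactlySupported_sum {ι : Type*} [Fintype ι] (c : ι → ℝ≥0) {μ : ι → Measure X}
    (hμ : ∀ j, (μ j).IsCompactlySupported) : (∑ j, c j • μ j).IsCompactlySupported := by
  choose K hK hμK using hμ
  refine ⟨⋃ j, K j, isCompact_iUnion hK, ?_⟩
  rw [finsetSum_apply]
  refine Finset.sum_eq_zero fun j _ => ?_
  rw [smul_apply, measure_mono_null (compl_subset_compl.2 (subset_iUnion K j)) (hμK j), smul_zero]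

theorem IsCompactlySupported.map_of_mapsTo {α Z : Type*} [MeasurableSpace α]
    [TopologicalSpace Z] [T2Space Z] [MeasurableSpace Z] [OpensMeasurableSpace Z]
    {μ : Measure α} {w : α → Z} {K : Set α} {K' : Set Z} (hw : Measurable w)
    (hK : μ Kᶜ = 0) (hK' : IsCompact K') (hwK : MapsTo w K K') :
    (μ.map w).IsCompactlySupported :=
  ⟨K', hK', by
    rw [map_apply hw hK'.measurableSet.compl]
    exact measure_mono_null (fun x hx hxK => hx (hwK hxK)) hK⟩

theorem IsCompactlySupported.map [OpensMeasurableSpace X] {Z : Type*} [TopologicalSpace Z]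
    [T2Space Z] [MeasurableSpace Z] [BorelSpace Z] {w : X → Z} (hμ : μ.IsCompactlySupported)
    (hw : Continuous w) : (μ.map w).IsCompactlySupported :=
  let ⟨K, hK, hμK⟩ := hμ
  map_of_mapsTo hw.measurable hμK (hK.image hw) (mapsTo_image w K)

end Topological

variable {X : Type*} [MetricSpace X] [MeasurableSpace X] [BorelSpace X] {μ : Measure X}

theorem IsCompactlySupported.map_comp {r φ : X → X} (hμ : μ.IsCompactlySupported)
    (hr : Measurable r)
    (hr_supp : ∀ ρ : Measure X, ρ.IsCompactlySupported → (ρ.map r).IsCompactlySupported)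
    (hφ : Continuous φ) : (μ.map (r ∘ φ)).IsCompactlySupported := by
  rw [← map_map hr hφ.measurable]
  exact hr_supp _ (hμ.map hφ)

theorem IsCompactlySupported.map_of_dist_le {r : X → X} {ε : ℝ} {Y : Set X}
    (hμ : μ.IsCompactlySupported) (hr : Measurable r)
    (hY : ∀ D : Set X, Bornology.IsBounded D → (D ∩ Y).Finite)
    (hrY : ∀ x, r x ∈ Y) (hr_dist : ∀ x, dist x (r x) ≤ ε) :
    (μ.map r).IsCompactlySupported := by
  obtain ⟨K, hK, hμK⟩ := hμ
  refine map_of_mapsTo (K' := Metric.cthickening ε K ∩ Y) hr hμK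
    (hY _ hK.isBounded.cthickening).isCompact fun x hx => ?_
  exact ⟨Metric.mem_cthickening_of_dist_le _ _ _ _ hx (by rw [dist_comm]; exact hr_dist x), hrY x⟩

theorem IsCompactlySupported.integrable {E : Type*} [NormedAddCommGroup E] [IsFiniteMeasure μ]
    {f : X → E} (hμ : μ.IsCompactlySupported) (hf : Continuous f) : Integrable f μ := by
  obtain ⟨K, hK, hμK⟩ := hμ
  rw [← restrict_eq_self_of_ae_mem (mem_ae_iff.2 hμK)]
  exact hf.continuousOn.integrableOn_compact hK

end MeasureTheory.Measure

open Measure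

section MarkovOperator

variable {α ι : Type*} [MeasurableSpace α] [Fintype ι]

theorem integral_sum_smul_measure (c : ι → ℝ≥0) {μ : ι → Measure α} {f : α → ℝ}
    (hf : ∀ j, Integrable f (μ j)) :
    ∫ a, f a ∂(∑ j, c j • μ j) = ∑ j, (c j : ℝ) * ∫ a, f a ∂μ j := by
  rw [integral_finsetSum_measure fun j _ => (hf j).smul_measure_nnreal]
  simp only [integral_smul_nnreal_measure, NNReal.smul_def, smul_eq_mul]

noncomputable def markovOp (p : ι → ℝ≥0) (w : ι → α → α) (ρ : Measure α) : Measure α :=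
  ∑ j, p j • ρ.map (w j)

theorem isProbabilityMeasure_markovOp {p : ι → ℝ≥0} (hp : ∑ j, p j = 1) {w : ι → α → α}
    (hw : ∀ j, Measurable (w j)) (ρ : Measure α) [IsProbabilityMeasure ρ] :
    IsProbabilityMeasure (markovOp p w ρ) := by
  constructor
  simp only [markovOp, finsetSum_apply, Measure.smul_apply, map_apply (hw _) MeasurableSet.univ,
    preimage_univ, measure_univ, ENNReal.smul_def, smul_eq_mul, mul_one]
  exact_mod_cast hp

end MarkovOperator

section MongeKantorovich

variable {X : Type*} [MetricSpace X] [MeasurableSpace X]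

theorem dMK_le {μ ν : Measure X} {c : ℝ}
    (h : ∀ f : X → ℝ, LipschitzWith 1 f → |∫ x, f x ∂μ - ∫ x, f x ∂ν| ≤ c) :
    dMK μ ν ≤ c := by
  refine Real.sSup_le ?_ ?_
  · rintro s ⟨f, hf, rfl⟩
    exact h f hf
  · simpa using h (fun _ => 0) (LipschitzWith.const' 0)

variable [BorelSpace X]

theorem abs_integral_sub_le_of_subset_closedBall {μ : Measure X} [IsProbabilityMeasure μ]
    {K : Set X} (hK : IsCompact K) (hμK : μ Kᶜ = 0) {x₀ : X} {C : ℝ}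
    (hKC : K ⊆ Metric.closedBall x₀ C) {f : X → ℝ} (hf : LipschitzWith 1 f) :
    |∫ x, f x ∂μ - f x₀| ≤ C := by
  have hint : Integrable f μ := IsCompactlySupported.integrable ⟨K, hK, hμK⟩ hf.continuous
  have hbound : ∀ᵐ x ∂μ, ‖f x - f x₀‖ ≤ C := by
    filter_upwards [mem_ae_iff.2 hμK] with x hx
    simpa [← dist_eq_norm] using hf.dist_le_mul_of_le (hKC hx)
  calc |∫ x, f x ∂μ - f x₀| = ‖∫ x, (f x - f x₀) ∂μ‖ := by
        rw [integral_sub hint (integrable_const _), integral_const, Real.norm_eq_abs]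
        simp
    _ ≤ C := by simpa using norm_integral_le_of_norm_le_const hbound

theorem bddAbove_dMK_set {μ ν : Measure X} [IsProbabilityMeasure μ] [IsProbabilityMeasure ν]
    (hμ : μ.IsCompactlySupported) (hν : ν.IsCompactlySupported) :
    BddAbove {s : ℝ | ∃ f : X → ℝ, LipschitzWith 1 f ∧ s = |∫ x, f x ∂μ - ∫ x, f x ∂ν|} := by
  obtain ⟨K, hK, hμK⟩ := hμ
  obtain ⟨K', hK', hνK'⟩ := hν
  obtain ⟨x₀⟩ := nonempty_of_isProbabilityMeasure μ
  obtain ⟨C, hC⟩ := (hK.union hK').isBounded.subset_closedBall x₀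
  refine ⟨2 * C, ?_⟩
  rintro s ⟨f, hf, rfl⟩
  have h := abs_integral_sub_le_of_subset_closedBall hK hμK (subset_union_left.trans hC) hf
  have h' := abs_integral_sub_le_of_subset_closedBall hK' hνK' (subset_union_right.trans hC) hf
  calc |∫ x, f x ∂μ - ∫ x, f x ∂ν| = |(∫ x, f x ∂μ - f x₀) - (∫ x, f x ∂ν - f x₀)| := by ring_nf
    _ ≤ 2 * C := (abs_sub _ _).trans (by linarith)

variable {μ ν : Measure X} [IsProbabilityMeasure μ] [IsProbabilityMeasure ν]

theorem abs_integral_sub_le_dMK (hμ : μ.IsCompactlySupported) (hν : ν.IsCompactlySupported)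
    {f : X → ℝ} (hf : LipschitzWith 1 f) :
    |∫ x, f x ∂μ - ∫ x, f x ∂ν| ≤ dMK μ ν :=
  le_csSup (bddAbove_dMK_set hμ hν) ⟨f, hf, rfl⟩

theorem LipschitzWith.abs_integral_sub_le_mul_dMK (hμ : μ.IsCompactlySupported)
    (hν : ν.IsCompactlySupported) {K : ℝ≥0} {f : X → ℝ} (hf : LipschitzWith K f) :
    |∫ x, f x ∂μ - ∫ x, f x ∂ν| ≤ K * dMK μ ν := by
  rcases eq_or_ne K 0 with rfl | hK
  · obtain ⟨x₀⟩ := nonempty_of_isProbabilityMeasure μ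
    have hconst : f = fun _ => f x₀ := funext fun x => by
      simpa using hf.dist_le_mul x x₀
    rw [hconst]
    simp
  · have hg : LipschitzWith 1 fun x => (K⁻¹ : ℝ) * f x := by
      have := (lipschitzWith_smul (K⁻¹ : ℝ)).comp hf
      simp only [nnnorm_inv, NNReal.nnnorm_eq, hK, ne_eq, not_false_eq_true,
        inv_mul_cancel₀] at this
      exact this
    have h := abs_integral_sub_le_dMK hμ hν hg
    rw [integral_const_mul, integral_const_mul, ← mul_sub, abs_mul,
      abs_of_nonneg (by positivity)] at h
    rwa [← inv_mul_le_iff₀ (by positivity)]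

theorem dMK_triangle {σ : Measure X} [IsProbabilityMeasure σ] (hμ : μ.IsCompactlySupported)
    (hσ : σ.IsCompactlySupported) (hν : ν.IsCompactlySupported) :
    dMK μ ν ≤ dMK μ σ + dMK σ ν :=
  dMK_le fun _ hf => (abs_sub_le _ _ _).trans
    (add_le_add (abs_integral_sub_le_dMK hμ hσ hf) (abs_integral_sub_le_dMK hσ hν hf))

theorem dMK_map_le_of_dist_le {ρ : Measure X} [IsProbabilityMeasure ρ] {w w' : X → X} {ε : ℝ}
    (hw : Measurable w) (hw' : Measurable w') (hρw : (ρ.map w).IsCompactlySupported)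
    (hρw' : (ρ.map w').IsCompactlySupported) (hdist : ∀ x, dist (w x) (w' x) ≤ ε) :
    dMK (ρ.map w) (ρ.map w') ≤ ε := by
  refine dMK_le fun f hf => ?_
  have hint : ∀ {v : X → X}, Measurable v → (ρ.map v).IsCompactlySupported →
      Integrable (fun x => f (v x)) ρ := fun hv hρv =>
    have := isProbabilityMeasure_map (μ := ρ) hv.aemeasurable
    (integrable_map_measure hf.continuous.aestronglyMeasurable hv.aemeasurable).1
      (hρv.integrable hf.continuous)
  rw [integral_map hw.aemeasurable hf.continuous.aestronglyMeasurable,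
    integral_map hw'.aemeasurable hf.continuous.aestronglyMeasurable,
    ← integral_sub (hint hw hρw) (hint hw' hρw'), ← Real.norm_eq_abs]
  have hbound : ∀ x, ‖f (w x) - f (w' x)‖ ≤ ε := fun x => by
    rw [← dist_eq_norm]
    simpa using hf.dist_le_mul_of_le (hdist x)
  simpa using norm_integral_le_of_norm_le_const (μ := ρ) (Eventually.of_forall hbound)

theorem dMK_map_le_mul (hμ : μ.IsCompactlySupported) (hν : ν.IsCompactlySupported)
    {φ : X → X} {α : ℝ≥0} (hφ : LipschitzWith α φ) :
    dMK (μ.map φ) (ν.map φ) ≤ α * dMK μ ν := by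
  refine dMK_le fun f hf => ?_
  rw [integral_map hφ.continuous.aemeasurable hf.continuous.aestronglyMeasurable,
    integral_map hφ.continuous.aemeasurable hf.continuous.aestronglyMeasurable]
  simpa using (hf.comp hφ).abs_integral_sub_le_mul_dMK hμ hν

theorem dMK_sum_smul_le {ι : Type*} [Fintype ι] (c : ι → ℝ≥0) {μ ν : ι → Measure X}
    (hμ : ∀ j, IsProbabilityMeasure (μ j)) (hν : ∀ j, IsProbabilityMeasure (ν j))
    (hμc : ∀ j, (μ j).IsCompactlySupported) (hνc : ∀ j, (ν j).IsCompactlySupported) :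
    dMK (∑ j, c j • μ j) (∑ j, c j • ν j) ≤ ∑ j, (c j : ℝ) * dMK (μ j) (ν j) := by
  refine dMK_le fun f hf => ?_
  rw [integral_sum_smul_measure c fun j => (hμc j).integrable hf.continuous,
    integral_sum_smul_measure c fun j => (hνc j).integrable hf.continuous,
    ← Finset.sum_sub_distrib]
  refine (Finset.abs_sum_le_sum_abs _ _).trans (Finset.sum_le_sum fun j _ => ?_)
  rw [← mul_sub, abs_mul, NNReal.abs_eq]
  exact mul_le_mul_of_nonneg_left (abs_integral_sub_le_dMK (hμc j) (hνc j) hf) (c j).coe_nonneg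

end MongeKantorovich

section MarkovOperator

variable {X ι : Type*} [MetricSpace X] [MeasurableSpace X] [BorelSpace X] [Fintype ι]
  {p : ι → ℝ≥0}

theorem dMK_sum_smul_le_of_forall_le (hp : ∑ j, p j = 1) {μ ν : ι → Measure X}
    (hμ : ∀ j, IsProbabilityMeasure (μ j)) (hν : ∀ j, IsProbabilityMeasure (ν j))
    (hμc : ∀ j, (μ j).IsCompactlySupported) (hνc : ∀ j, (ν j).IsCompactlySupported)
    {b : ℝ} (hb : ∀ j, dMK (μ j) (ν j) ≤ b) :
    dMK (∑ j, p j • μ j) (∑ j, p j • ν j) ≤ b :=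
  calc dMK (∑ j, p j • μ j) (∑ j, p j • ν j) ≤ ∑ j, (p j : ℝ) * dMK (μ j) (ν j) :=
        dMK_sum_smul_le p hμ hν hμc hνc
    _ ≤ ∑ j, (p j : ℝ) * b := by gcongr with j; exact hb j
    _ = b := by rw [← Finset.sum_mul, ← NNReal.coe_sum, hp, NNReal.coe_one, one_mul]

theorem dMK_markovOp_le_of_dist_le (hp : ∑ j, p j = 1) {w w' : ι → X → X} {ε : ℝ}
    (hw : ∀ j, Measurable (w j)) (hw' : ∀ j, Measurable (w' j)) {ρ : Measure X}
    [IsProbabilityMeasure ρ] (hρw : ∀ j, (ρ.map (w j)).IsCompactlySupported)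
    (hρw' : ∀ j, (ρ.map (w' j)).IsCompactlySupported)
    (hdist : ∀ j x, dist (w j x) (w' j x) ≤ ε) :
    dMK (markovOp p w ρ) (markovOp p w' ρ) ≤ ε :=
  dMK_sum_smul_le_of_forall_le hp (fun j => isProbabilityMeasure_map (hw j).aemeasurable)
    (fun j => isProbabilityMeasure_map (hw' j).aemeasurable) hρw hρw' fun j =>
    dMK_map_le_of_dist_le (hw j) (hw' j) (hρw j) (hρw' j) (hdist j)

theorem dMK_markovOp_le_mul (hp : ∑ j, p j = 1) {φ : ι → X → X} {α : ℝ≥0}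
    (hφ : ∀ j, LipschitzWith α (φ j)) {μ ν : Measure X} [IsProbabilityMeasure μ]
    [IsProbabilityMeasure ν] (hμ : μ.IsCompactlySupported) (hν : ν.IsCompactlySupported) :
    dMK (markovOp p φ μ) (markovOp p φ ν) ≤ α * dMK μ ν :=
  dMK_sum_smul_le_of_forall_le hp
    (fun j => isProbabilityMeasure_map (hφ j).continuous.aemeasurable)
    (fun j => isProbabilityMeasure_map (hφ j).continuous.aemeasurable)
    (fun j => hμ.map (hφ j).continuous) (fun j => hν.map (hφ j).continuous) fun j =>
    dMK_map_le_mul hμ hν (hφ j)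

theorem dMK_markovOp_comp_le (hp : ∑ j, p j = 1) {φ : ι → X → X} {α : ℝ≥0}
    (hφ : ∀ j, LipschitzWith α (φ j)) {r : X → X} {ε : ℝ} (hr : Measurable r)
    (hr_dist : ∀ x, dist x (r x) ≤ ε)
    (hr_supp : ∀ ρ : Measure X, ρ.IsCompactlySupported → (ρ.map r).IsCompactlySupported)
    {μ : Measure X} [IsProbabilityMeasure μ] (hμ : μ.IsCompactlySupported)
    (hμfix : markovOp p φ μ = μ) {ρ : Measure X} [IsProbabilityMeasure ρ]
    (hρ : ρ.IsCompactlySupported) :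
    dMK (markovOp p (fun j => r ∘ φ j) ρ) μ ≤ ε + α * dMK ρ μ := by
  have hφm : ∀ j, Measurable (φ j) := fun j => (hφ j).continuous.measurable
  have hρφ : ∀ j, (ρ.map (φ j)).IsCompactlySupported := fun j => hρ.map (hφ j).continuous
  have hρrφ : ∀ j, (ρ.map (r ∘ φ j)).IsCompactlySupported := fun j =>
    hρ.map_comp hr hr_supp (hφ j).continuous
  have := isProbabilityMeasure_markovOp hp (fun j => hr.comp (hφm j)) ρ
  have := isProbabilityMeasure_markovOp hp hφm ρ
  calc dMK (markovOp p (fun j => r ∘ φ j) ρ) μ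
      ≤ dMK (markovOp p (fun j => r ∘ φ j) ρ) (markovOp p φ ρ)
        + dMK (markovOp p φ ρ) (markovOp p φ μ) := by
        rw [hμfix]
        exact dMK_triangle (isCompactlySupported_sum p hρrφ) (isCompactlySupported_sum p hρφ) hμ
    _ ≤ ε + α * dMK ρ μ := by
        gcongr
        · exact dMK_markovOp_le_of_dist_le hp (fun j => hr.comp (hφm j)) hφm hρrφ hρφ
            fun j x => by rw [dist_comm]; exact hr_dist (φ j x)
        · exact dMK_markovOp_le_mul hp hφ hρ hμ

end MarkovOperator

theorem le_div_add_pow_mul_of_le_add_mul {a : ℕ → ℝ} {ε α : ℝ} (hε : 0 ≤ ε) (hα₀ : 0 ≤ α)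
    (hα₁ : α < 1) (ha : ∀ n, a (n + 1) ≤ ε + α * a n) (n : ℕ) :
    a n ≤ ε / (1 - α) + α ^ n * a 0 := by
  have hα : 1 - α ≠ 0 := (sub_pos.2 hα₁).ne'
  induction n with
  | zero => simpa using div_nonneg hε (sub_pos.2 hα₁).le
  | succ n ih =>
    calc a (n + 1) ≤ ε + α * (ε / (1 - α) + α ^ n * a 0) :=
          (ha n).trans (by gcongr)
      _ = ε / (1 - α) + α ^ (n + 1) * a 0 := by field_simp; ring

theorem stmt18_general {X : Type*} [MetricSpace X]
    [MeasurableSpace X] [BorelSpace X]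
    {L : ℕ}
    (φ : Fin L → X → X) (αS : NNReal) (hαS : αS < 1)
    (hφ : ∀ j, LipschitzWith αS (φ j))
    (p : Fin L → NNReal) (hp1 : ∑ j, p j = 1)
    (μS : Measure X) [IsProbabilityMeasure μS]
    (hμSc : ∃ K : Set X, IsCompact K ∧ μS Kᶜ = 0)
    (hμSfix : (∑ j, p j • μS.map (φ j)) = μS)
    (ε : ℝ) (hε : 0 < ε) (Xhat : Set X)
    (hproper : ∀ D : Set X, Bornology.IsBounded D → (D ∩ Xhat).Finite)
    (r : X → X) (hrm : Measurable r)
    (hr_range : ∀ x, r x ∈ Xhat)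
    (hr_close : ∀ x, dist x (r x) ≤ ε)
    (ν : Measure X) [IsProbabilityMeasure ν]
    (hνc : ∃ K : Set X, IsCompact K ∧ ν Kᶜ = 0) :
    (∀ n : ℕ,
      dMK ((fun ρ : Measure X => ∑ j, p j • ρ.map (r ∘ φ j))^[n] ν) μS
        ≤ ε / (1 - αS) + (αS : ℝ) ^ n * dMK ν μS) ∧
    ∀ᶠ n in atTop,
      dMK ((fun ρ : Measure X => ∑ j, p j • ρ.map (r ∘ φ j))^[n] ν) μS
        ≤ 2 * ε / (1 - αS) := by
  let M := markovOp p fun j => r ∘ φ j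
  have hα : (αS : ℝ) < 1 := hαS
  have hr_supp : ∀ ρ : Measure X, ρ.IsCompactlySupported → (ρ.map r).IsCompactlySupported :=
    fun ρ hρ => hρ.map_of_dist_le hrm hproper hr_range hr_close
  have hM : ∀ n, IsProbabilityMeasure (M^[n] ν) ∧ (M^[n] ν).IsCompactlySupported :=
    Function.Iterate.rec _ ⟨inferInstance, hνc⟩ fun ρ ⟨_, hρ⟩ =>
      ⟨isProbabilityMeasure_markovOp hp1 (fun j => hrm.comp (hφ j).continuous.measurable) ρ,
        isCompactlySupported_sum p fun j => hρ.map_comp hrm hr_supp (hφ j).continuous⟩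
  have hbound : ∀ n, dMK (M^[n] ν) μS ≤ ε / (1 - αS) + αS ^ n * dMK ν μS :=
    le_div_add_pow_mul_of_le_add_mul hε.le αS.2 hα fun n => by
      obtain ⟨_, hρ⟩ := hM n
      rw [Function.iterate_succ_apply']
      exact dMK_markovOp_comp_le hp1 hφ hrm hr_close hr_supp hμSc hμSfix hρ
  refine ⟨hbound, ?_⟩
  have hdecay : Tendsto (fun n => (αS : ℝ) ^ n * dMK ν μS) atTop (nhds 0) := by
    simpa using (tendsto_pow_atTop_nhds_zero_of_lt_one αS.2 hα).mul_const (dMK ν μS)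
  filter_upwards [hdecay.eventually_lt_const (div_pos hε (sub_pos.2 hα))] with n hn
  exact (hbound n).trans (by rw [mul_div_assoc, two_mul]; exact add_le_add_right hn.le _)

/-- Discrete approximation of the Hutchinson measure of an IFS with
probabilities: iterates of the discretized Markov operator on any probability
measure supported in a proper `ε`-net approximate the Hutchinson measure `μ_S`
with error `ε/(1−α_S) + α_Sⁿ · d_MK(ν, μ_S)`, and eventually with error
`2ε/(1−α_S)`. -/
theorem stmt18 {X : Type*} [MetricSpace X] [CompleteSpace X]
    [MeasurableSpace X] [BorelSpace X]
    {L : ℕ} (hL : 0 < L)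
    (φ : Fin L → X → X) (αS : NNReal) (hαS : αS < 1)
    (hφ : ∀ j, LipschitzWith αS (φ j))
    (p : Fin L → NNReal) (hp : ∀ j, 0 < p j) (hp1 : ∑ j, p j = 1)
    (μS : Measure X) [IsProbabilityMeasure μS]
    (hμSc : ∃ K : Set X, IsCompact K ∧ μS Kᶜ = 0)
    (hμSfix : (∑ j, p j • μS.map (φ j)) = μS)
    (ε : ℝ) (hε : 0 < ε) (Xhat : Set X)
    (hnet : ∀ x : X, ∃ y ∈ Xhat, dist x y ≤ ε)
    (hproper : ∀ D : Set X, Bornology.IsBounded D → (D ∩ Xhat).Finite)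
    (r : X → X) (hrm : Measurable r)
    (hr_range : ∀ x, r x ∈ Xhat)
    (hr_id : ∀ x ∈ Xhat, r x = x)
    (hr_close : ∀ x, dist x (r x) ≤ ε)
    (ν : Measure X) [IsProbabilityMeasure ν]
    (hνc : ∃ K : Set X, IsCompact K ∧ ν Kᶜ = 0)
    (hνsupp : msupport ν ⊆ Xhat) :
    (∀ n : ℕ,
      dMK ((fun ρ : Measure X => ∑ j, p j • ρ.map (r ∘ φ j))^[n] ν) μS
        ≤ ε / (1 - αS) + (αS : ℝ) ^ n * dMK ν μS) ∧
    ∀ᶠ n in atTop,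
      dMK ((fun ρ : Measure X => ∑ j, p j • ρ.map (r ∘ φ j))^[n] ν) μS
        ≤ 2 * ε / (1 - αS) :=
  stmt18_general φ αS hαS hφ p hp1 μS hμSc hμSfix ε hε Xhat hproper r hrm hr_range hr_close ν hνc
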